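/- arXiv:1803.05281 — 2 statements merged into one kernel-verified Lean document; each statement's English description precedes it below -/
import Mathlib

section
/- Let A(S) be a skew-symmetrizable cluster algebra of rank n with principal coefficients at t_0, let x_t and x_{t'} be two clusters of A(S) with G-matrices G_t and G_{t'}, and let I ⊆ [1,n] := {1,…,n}. Then (x_t, x_{t'}) is a g-pair along I if and only if x_{t'} is connected with x_{t_0} by an I-sequence and G_t|_{I×[1,n]} = G_{t'}|_{I×I} · Q for some |I|×n matrix Q with nonnegative integer entries. -/
/-!
Formalization of skew-symmetrizable cluster algebras with principal coefficients
at an initial vertex `t₀`.  The ambient field is realized concretely as the field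
of rational functions in the cluster variables `x₁,…,xₙ` and the (principal)
coefficient variables `y₁,…,yₙ` over `ℤ`; the tropical semifield
`Trop(y₁,…,yₙ)` is realized by recording the exponent vector of a Laurent
monomial in the `y`-variables.  Seeds are triples `(x, y, B)` and mutation is
given by the Fomin–Zelevinsky rules.  A cluster of the cluster algebra is (the
cluster of) a seed reachable from the initial seed by a finite sequence of
mutations.
-/

open scoped BigOperators

namespace CA

/-- An integer matrix is skew-symmetrizable if `D·B` is skew-symmetric for some
positive integer diagonal matrix `D`. -/
def SkewSymmetrizable {n : ℕ} (B : Matrix (Fin n) (Fin n) ℤ) : Prop :=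
  ∃ S : Fin n → ℤ, (∀ i, 0 < S i) ∧ ∀ i j, S i * B i j = -(S j * B j i)

/-- The ambient field for a rank-`n` cluster algebra with principal coefficients:
rational functions in `x₁,…,xₙ, y₁,…,yₙ` over `ℤ`. -/
abbrev Amb (n : ℕ) := FractionRing (MvPolynomial (Fin n ⊕ Fin n) ℤ)

/-- The initial cluster variable `xᵢ`. -/
noncomputable def px {n : ℕ} (i : Fin n) : Amb n :=
  algebraMap (MvPolynomial (Fin n ⊕ Fin n) ℤ) (Amb n) (MvPolynomial.X (Sum.inl i))

/-- The initial coefficient variable `yⱼ`. -/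
noncomputable def py {n : ℕ} (j : Fin n) : Amb n :=
  algebraMap (MvPolynomial (Fin n ⊕ Fin n) ℤ) (Amb n) (MvPolynomial.X (Sum.inr j))

/-- The Laurent monomial `∏ yⱼ^(c j)` in the initial `y`-variables; this realizes
the element of the tropical semifield `Trop(y₁,…,yₙ)` with exponent vector `c`
inside the ambient field. -/
noncomputable def yMon {n : ℕ} (c : Fin n → ℤ) : Amb n := ∏ j, py j ^ c j

/-- The Laurent monomial `∏ (xs i)^(u i)` in the variables `xs`. -/
noncomputable def xMon {n : ℕ} (xs : Fin n → Amb n) (u : Fin n → ℤ) : Amb n :=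
  ∏ i, xs i ^ u i

/-- The monomial `∏ (xs i)^(v i)` with natural exponents (a cluster monomial when
`xs` is a cluster). -/
noncomputable def xMonN {n : ℕ} (xs : Fin n → Amb n) (v : Fin n → ℕ) : Amb n :=
  ∏ i, xs i ^ v i

/-- A seed of a cluster algebra of geometric type whose coefficients lie in the
tropical semifield `Trop(y₁,…,yₙ)`: `x` is the cluster, the coefficient
`y i ∈ Trop(y₁,…,yₙ)` is recorded by its exponent vector `y i : Fin n → ℤ`, and
`B` is the exchange matrix. -/
structure Seed (n : ℕ) where
  x : Fin n → Amb n
  y : Fin n → Fin n → ℤ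
  B : Matrix (Fin n) (Fin n) ℤ

/-- Mutation of a seed in direction `k` (Fomin–Zelevinsky).  In the tropical
semifield, `1 ⊕ y_k` has exponent vector `min (y k) 0`, `y_k/(1 ⊕ y_k)` has
exponent vector `max (y k) 0` and `1/(1 ⊕ y_k)` has exponent vector
`-min (y k) 0`. -/
noncomputable def mutate {n : ℕ} (s : Seed n) (k : Fin n) : Seed n where
  x := fun i => if i = k then
      (s.x k)⁻¹ *
        (yMon (fun j => max (s.y k j) 0) * (∏ i', s.x i' ^ max (s.B i' k) 0) +
          yMon (fun j => -min (s.y k j) 0) * (∏ i', s.x i' ^ max (-s.B i' k) 0))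
    else s.x i
  y := fun i j => if i = k then -(s.y k j)
    else s.y i j + max (s.B k i) 0 * s.y k j - s.B k i * min (s.y k j) 0
  B := Matrix.of fun i j => if i = k ∨ j = k then -(s.B i j)
    else s.B i j + (s.B i k).sign * max (s.B i k * s.B k j) 0

/-- The initial seed at `t₀`, with principal coefficients (`y_{i;t₀} = yᵢ`) and
exchange matrix `B0`. -/
noncomputable def initialSeed {n : ℕ} (B0 : Matrix (Fin n) (Fin n) ℤ) : Seed n where
  x := px
  y := fun i j => if j = i then 1 else 0
  B := B0

/-- `s` is a seed of the cluster pattern determined by `s0`, i.e. it is obtained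
from `s0` by a finite sequence of mutations. -/
def Reachable {n : ℕ} (s0 s : Seed n) : Prop :=
  ∃ l : List (Fin n), s = l.foldl mutate s0

/-- `s` is obtained from `s0` by a finite sequence of mutations in directions
belonging to `I` (an `I`-sequence). -/
def ReachableAlong {n : ℕ} (I : Finset (Fin n)) (s0 s : Seed n) : Prop :=
  ∃ l : List (Fin n), (∀ k ∈ l, k ∈ I) ∧ s = l.foldl mutate s0

/-- The cluster of `s` is connected with the cluster of `s0` by an `I`-sequence:
some seed of the pattern whose cluster equals the cluster of `s0` is connected by
mutations in directions in `I` to a seed whose cluster equals the cluster of `s`. -/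
def ConnectedByISeq {n : ℕ} (I : Finset (Fin n)) (s0 s : Seed n) : Prop :=
  ∃ s1 s2 : Seed n, Reachable s0 s1 ∧ Set.range s1.x = Set.range s0.x ∧
    ReachableAlong I s1 s2 ∧ Set.range s2.x = Set.range s.x

/-- `z` is homogeneous of degree `g` for the `ℤⁿ`-grading with `deg xᵢ = eᵢ`,
`deg yⱼ = -(j`-th column of `B0)`: it is a ℤ-linear combination of Laurent
monomials `x^u y^v` (`u ∈ ℤⁿ`, `v ∈ ℕⁿ`) each of degree `u - B0·v = g`.
For a cluster variable this says that `g` is its `g`-vector. -/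
def IsHomogOfDeg {n : ℕ} (B0 : Matrix (Fin n) (Fin n) ℤ) (z : Amb n) (g : Fin n → ℤ) : Prop :=
  ∃ c : ((Fin n → ℤ) × (Fin n → ℕ)) →₀ ℤ,
    (z = ∑ p ∈ c.support, (c p : Amb n) * xMon px p.1 * (∏ j, py j ^ (p.2 j : ℤ))) ∧
    ∀ p ∈ c.support, ∀ i, p.1 i - (∑ j, B0 i j * (p.2 j : ℤ)) = g i

/-- `G` is the `G`-matrix of the seed `s`: for each `i`, the `i`-th column of `G`
is the `g`-vector of the cluster variable `x_{i}` of `s`. -/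
def IsGMatrix {n : ℕ} (B0 : Matrix (Fin n) (Fin n) ℤ) (s : Seed n)
    (G : Matrix (Fin n) (Fin n) ℤ) : Prop :=
  ∀ i, IsHomogOfDeg B0 (s.x i) fun l => G l i

/-- `d` is the denominator vector of `z` with respect to the cluster of `s`:
`z = f / ∏ (x_{i;s})^(d i)` where `f` is a polynomial in the cluster variables of
`s` with coefficients in `ℤP = ℤ[y₁^{±1},…,yₙ^{±1}]` divisible by none of the
`x_{j;s}`. -/
def IsDVector {n : ℕ} (s : Seed n) (z : Amb n) (d : Fin n → ℤ) : Prop :=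
  ∃ c : ((Fin n → ℕ) × (Fin n → ℤ)) →₀ ℤ,
    (z * ∏ i, s.x i ^ d i =
      ∑ p ∈ c.support, (c p : Amb n) * (∏ i, s.x i ^ p.1 i) * (∏ j, py j ^ p.2 j)) ∧
    ∀ j, ∃ p ∈ c.support, p.1 j = 0

/-- `(s, s')` is a `g`-pair along `I` (relative to the `G`-matrices `Gt` of `s`
and `Gt'` of `s'`): the cluster of `s'` is connected with the initial cluster by
an `I`-sequence, and for every cluster monomial in `s` (with exponent vector `v`)
there is a cluster monomial in `s'` (exponent vector `v'`, supported on `I`) with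
the same projection `π_I` of the `g`-vector. -/
def IsGPair {n : ℕ} (s0 s s' : Seed n) (Gt Gt' : Matrix (Fin n) (Fin n) ℤ)
    (I : Finset (Fin n)) : Prop :=
  ConnectedByISeq I s0 s' ∧
  ∀ v : Fin n → ℕ, ∃ v' : Fin n → ℕ, (∀ i, i ∉ I → v' i = 0) ∧
    ∀ i ∈ I, Gt.mulVec (fun l => (v l : ℤ)) i = Gt'.mulVec (fun l => (v' l : ℤ)) i

/-- The cluster algebra (with principal coefficients at `t₀`, initial exchange
matrix `B0`) has the enough `g`-pairs property: for every `I` and every cluster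
there is a cluster forming a `g`-pair with it along `I`. -/
def EnoughGPairs {n : ℕ} (B0 : Matrix (Fin n) (Fin n) ℤ) (s0 : Seed n) : Prop :=
  ∀ (I : Finset (Fin n)) (s : Seed n), Reachable s0 s →
    ∀ Gt : Matrix (Fin n) (Fin n) ℤ, IsGMatrix B0 s Gt →
      ∃ (s' : Seed n) (Gt' : Matrix (Fin n) (Fin n) ℤ),
        Reachable s0 s' ∧ IsGMatrix B0 s' Gt' ∧ IsGPair s0 s s' Gt Gt' I


/-- Proposition: matrix characterization of `g`-pairs.
`(x_t, x_{t'})` is a `g`-pair along `I` if and only if `x_{t'}` is connected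
with `x_{t₀}` by an `I`-sequence and `G_t|_{I×[1,n]} = G_{t'}|_{I×I} · Q` for
some nonnegative integer matrix `Q` (of size `|I| × n`). -/
theorem gPair_iff_matrix_condition {n : ℕ} (B0 : Matrix (Fin n) (Fin n) ℤ)
    (hB0 : SkewSymmetrizable B0) (s s' : Seed n)
    (hs : Reachable (initialSeed B0) s) (hs' : Reachable (initialSeed B0) s')
    (Gt Gt' : Matrix (Fin n) (Fin n) ℤ)
    (hGt : IsGMatrix B0 s Gt) (hGt' : IsGMatrix B0 s' Gt')
    (I : Finset (Fin n)) :
    IsGPair (initialSeed B0) s s' Gt Gt' I ↔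
      (ConnectedByISeq I (initialSeed B0) s' ∧
        ∃ Q : Matrix (Fin n) (Fin n) ℤ, (∀ l j, 0 ≤ Q l j) ∧
          ∀ i ∈ I, ∀ j, Gt i j = ∑ l ∈ I, Gt' i l * Q l j) := by
  constructor
  · rintro ⟨hconn, hmon⟩
    refine ⟨hconn, ?_⟩
    choose v' hv'0 hv' using hmon
    refine ⟨Matrix.of fun l j => ((v' (fun m => if m = j then 1 else 0) l : ℤ)),
      fun l j => Int.ofNat_nonneg _, fun i hi j => ?_⟩
    have h := hv' (fun m => if m = j then 1 else 0) i hi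
    have hL : Gt.mulVec (fun l => (((if l = j then 1 else 0 : ℕ) : ℤ))) i = Gt i j := by
      simp [Matrix.mulVec, dotProduct, apply_ite (fun m : ℕ => (m : ℤ)),
        mul_ite, Finset.sum_ite_eq']
    have hR : Gt'.mulVec (fun l => ((v' (fun m => if m = j then 1 else 0) l : ℤ))) i =
        ∑ l ∈ I, Gt' i l * ((v' (fun m => if m = j then 1 else 0) l : ℤ)) := by
      rw [Matrix.mulVec, dotProduct]
      exact (Finset.sum_subset (Finset.subset_univ I) (fun l _ hl => by
        rw [hv'0 _ l hl]; simp)).symm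
    rw [hL, hR] at h
    simpa using h
  · rintro ⟨hconn, Q, hQ, hQeq⟩
    refine ⟨hconn, fun v => ?_⟩
    refine ⟨fun l => if l ∈ I then ∑ j, (Q l j).toNat * v j else 0,
      fun l hl => by simp [hl], fun i hi => ?_⟩
    have hcast : ∀ l ∈ I, (((if l ∈ I then ∑ j, (Q l j).toNat * v j else 0 : ℕ)) : ℤ) =
        ∑ j, Q l j * (v j : ℤ) := by
      intro l hl
      simp only [hl, if_true]
      push_cast
      exact Finset.sum_congr rfl fun j _ => by rw [Int.toNat_of_nonneg (hQ l j)]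
    rw [Matrix.mulVec, Matrix.mulVec, dotProduct, dotProduct]
    calc ∑ l, Gt i l * (v l : ℤ)
        = ∑ l, (∑ m ∈ I, Gt' i m * Q m l) * (v l : ℤ) := by
          exact Finset.sum_congr rfl fun l _ => by rw [hQeq i hi l]
      _ = ∑ m ∈ I, Gt' i m * ∑ l, Q m l * (v l : ℤ) := by
          simp_rw [Finset.sum_mul, Finset.mul_sum, mul_assoc]
          exact Finset.sum_comm ..
          
      _ = ∑ m ∈ I, Gt' i m *
            (((if m ∈ I then ∑ j, (Q m j).toNat * v j else 0 : ℕ)) : ℤ) := by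
          exact Finset.sum_congr rfl fun m hm => by rw [hcast m hm]
      _ = ∑ m, Gt' i m *
            (((if m ∈ I then ∑ j, (Q m j).toNat * v j else 0 : ℕ)) : ℤ) := by
          exact Finset.sum_subset (Finset.subset_univ I) (fun m _ hm => by simp [hm])

end CA
end

section
/- If a skew-symmetrizable cluster algebra A(S) with principal coefficients at t_0 has the enough g-pairs property, then the sign-coherence of G-matrices holds: any two nonzero entries of a G-matrix G_t of A(S) lying in the same row have the same sign. -/
/-!
Formalization of skew-symmetrizable cluster algebras with principal coefficients
at an initial vertex `t₀`.  The ambient field is realized concretely as the field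
of rational functions in the cluster variables `x₁,…,xₙ` and the (principal)
coefficient variables `y₁,…,yₙ` over `ℤ`; the tropical semifield
`Trop(y₁,…,yₙ)` is realized by recording the exponent vector of a Laurent
monomial in the `y`-variables.  Seeds are triples `(x, y, B)` and mutation is
given by the Fomin–Zelevinsky rules.  A cluster of the cluster algebra is (the
cluster of) a seed reachable from the initial seed by a finite sequence of
mutations.
-/

open scoped BigOperators

namespace CA

/-- Corollary: the enough `g`-pairs property implies the
sign-coherence of `G`-matrices.  If a skew-symmetrizable cluster algebra with
principal coefficients at `t₀` has the enough `g`-pairs property, then any two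
nonzero entries of a `G`-matrix lying in the same row have the same sign. -/
theorem sign_coherence_of_enoughGPairs {n : ℕ} (B0 : Matrix (Fin n) (Fin n) ℤ)
    (hB0 : SkewSymmetrizable B0)
    (h : EnoughGPairs B0 (initialSeed B0)) :
    ∀ s : Seed n, Reachable (initialSeed B0) s →
      ∀ Gt : Matrix (Fin n) (Fin n) ℤ, IsGMatrix B0 s Gt →
        ∀ i j1 j2, Gt i j1 ≠ 0 → Gt i j2 ≠ 0 → (0 < Gt i j1 ↔ 0 < Gt i j2) := by
  intro s hs Gt hGt i j1 j2 h1 h2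
  obtain ⟨s', Gt', -, -, -, hpair⟩ := h {i} s hs Gt hGt
  have key : ∀ j, ∃ m : ℕ, Gt i j = Gt' i i * m := by
    intro j
    obtain ⟨v', hv0, hv⟩ := hpair (fun l => if l = j then 1 else 0)
    refine ⟨v' i, ?_⟩
    have hvi := hv i (Finset.mem_singleton_self i)
    have hl : Gt.mulVec (fun l => (((if l = j then 1 else 0 : ℕ) : ℤ))) i = Gt i j := by
      simp [Matrix.mulVec, dotProduct, mul_ite, Finset.sum_ite_eq']
    have hr : Gt'.mulVec (fun l => ((v' l : ℤ))) i = Gt' i i * (v' i : ℤ) := by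
      rw [Matrix.mulVec, dotProduct]
      rw [Finset.sum_eq_single i]
      · intro b _ hb
        have : v' b = 0 := hv0 b (by simp [hb])
        simp [this]
      · intro hb; exact absurd (Finset.mem_univ i) hb
    rw [hl, hr] at hvi
    exact hvi
  obtain ⟨m1, hm1⟩ := key j1
  obtain ⟨m2, hm2⟩ := key j2
  have hm1pos : (0 : ℤ) < m1 := by
    rcases Nat.eq_zero_or_pos m1 with h0 | h0
    · exfalso; apply h1; rw [hm1, h0]; simp
    · exact_mod_cast h0
  have hm2pos : (0 : ℤ) < m2 := by
    rcases Nat.eq_zero_or_pos m2 with h0 | h0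
    · exfalso; apply h2; rw [hm2, h0]; simp
    · exact_mod_cast h0
  rw [hm1, hm2]
  constructor <;> intro hp
  · nlinarith
  · nlinarith

end CA
end
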